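/- (Proposition 2.) There exist finite sets 𝒮, 𝒮′, 𝒳, a probability distribution P on 𝒮 × 𝒳 whose marginal on 𝒮 has full support, and a function f : 𝒮 → 𝒮′ such that the Markov-approximation channel κ′ from 𝒮 to 𝒳 defined by κ′ x s := P(X=x | f(S)=f(s)) is NOT a garbling of the direct channel κ from 𝒮 to 𝒳 defined by κ x s := P(X=x | S=s). Equivalently, (X←f(S))·(f(S)←S) ⋠ (X←S). -/

import Mathlib

open Finset

/-- A probability distribution on a finite set. -/
def IsDist {S : Type} [Fintype S] (p : S → ℝ) : Prop :=
  (∀ s, 0 ≤ p s) ∧ ∑ s, p s = 1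

/-- A channel from `S` to `X`: a column-stochastic matrix. -/
def IsChannel {S X : Type} [Fintype S] [Fintype X] (κ : X → S → ℝ) : Prop :=
  (∀ x s, 0 ≤ κ x s) ∧ ∀ s, ∑ x, κ x s = 1

/-- `κ₁` is a garbling of `κ₂` (the Blackwell order `κ₁ ⪯ κ₂`). -/
def IsGarbling {S X₁ X₂ : Type} [Fintype S] [Fintype X₁] [Fintype X₂]
    (κ₁ : X₁ → S → ℝ) (κ₂ : X₂ → S → ℝ) : Prop :=
  ∃ lam : X₁ → X₂ → ℝ, IsChannel lam ∧ ∀ x₁ s, κ₁ x₁ s = ∑ x₂, lam x₁ x₂ * κ₂ x₂ s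

/-- Optimal expected utility: maximum over decision rules `d : X → A`. -/
noncomputable def optUtility {S X A : Type} [Fintype S] [Fintype X] [Fintype A]
    (p : S → ℝ) (u : A × S → ℝ) (κ : X → S → ℝ) : ℝ :=
  ⨆ d : X → A, ∑ s, ∑ x, p s * κ x s * u (d x, s)

/-- Mutual information between input (with distribution `p`) and output of channel `κ`;
terms with `κ x s = 0` are taken to be `0`. -/
noncomputable def mutualInfo {S X : Type} [Fintype S] [Fintype X]
    (p : S → ℝ) (κ : X → S → ℝ) : ℝ :=
  ∑ s, ∑ x, if κ x s = 0 then 0 else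
    p s * κ x s * Real.log (κ x s / ∑ s', p s' * κ x s')

/-- Channel composition: `(κ·λ) x s = ∑ t, κ x t * λ t s`. -/
def chanComp {S T X : Type} [Fintype S] [Fintype T] [Fintype X]
    (κ : X → T → ℝ) (lam : T → S → ℝ) : X → S → ℝ :=
  fun x s => ∑ t, κ x t * lam t s

/-- Marginal on `S` of a joint distribution on `S × X₁ × X₂`. -/
noncomputable def margS3 {S X₁ X₂ : Type} [Fintype S] [Fintype X₁] [Fintype X₂]
    (P : S × X₁ × X₂ → ℝ) (s : S) : ℝ := ∑ x₁, ∑ x₂, P (s, x₁, x₂)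

/-- The channel `X₁ ← S` of conditional probabilities `P(X₁ = x₁ | S = s)`. -/
noncomputable def chan1of3 {S X₁ X₂ : Type} [Fintype S] [Fintype X₁] [Fintype X₂]
    (P : S × X₁ × X₂ → ℝ) (x₁ : X₁) (s : S) : ℝ :=
  (∑ x₂, P (s, x₁, x₂)) / margS3 P s

/-- The channel `X₂ ← S` of conditional probabilities `P(X₂ = x₂ | S = s)`. -/
noncomputable def chan2of3 {S X₁ X₂ : Type} [Fintype S] [Fintype X₁] [Fintype X₂]
    (P : S × X₁ × X₂ → ℝ) (x₂ : X₂) (s : S) : ℝ :=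
  (∑ x₁, P (s, x₁, x₂)) / margS3 P s

/-- Pushforward of a joint distribution on `S × X₁ × X₂` along `f : S → S'`. -/
noncomputable def push3 {S S' X₁ X₂ : Type} [Fintype S] [Fintype X₁] [Fintype X₂]
    [DecidableEq S'] (f : S → S') (P : S × X₁ × X₂ → ℝ) : S' × X₁ × X₂ → ℝ :=
  fun q => ∑ s ∈ Finset.univ.filter (fun s => f s = q.1), P (s, q.2.1, q.2.2)

/-- Marginal on `S` of a joint distribution on `S × X`. -/
noncomputable def margS2 {S X : Type} [Fintype S] [Fintype X]
    (P : S × X → ℝ) (s : S) : ℝ := ∑ x, P (s, x)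

/-- The direct channel `X ← S` with entries `P(X = x | S = s)`. -/
noncomputable def chanDirect {S X : Type} [Fintype S] [Fintype X]
    (P : S × X → ℝ) (x : X) (s : S) : ℝ := P (s, x) / margS2 P s

/-- The Markov-approximation channel with entries `P(X = x | f(S) = f(s))`. -/
noncomputable def chanMarkov {S S' X : Type} [Fintype S] [Fintype X] [DecidableEq S']
    (f : S → S') (P : S × X → ℝ) (x : X) (s : S) : ℝ :=
  (∑ s' ∈ Finset.univ.filter (fun s' => f s' = f s), P (s', x)) /
    (∑ s' ∈ Finset.univ.filter (fun s' => f s' = f s), margS2 P s')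

theorem IsGarbling.column_eq {S X₁ X₂ : Type} [Fintype S] [Fintype X₁] [Fintype X₂]
    {κ₁ : X₁ → S → ℝ} {κ₂ : X₂ → S → ℝ} (h : IsGarbling κ₁ κ₂) {s t : S}
    (hst : ∀ x₂, κ₂ x₂ s = κ₂ x₂ t) (x₁ : X₁) : κ₁ x₁ s = κ₁ x₁ t := by
  obtain ⟨lam, -, hlam⟩ := h
  simp only [hlam, hst]

/-- `S` is uniform on `{0, 1, 2}`, `X = [S = 2]`, and `f` below merges `1` and `2`. The channel
`X ← S` cannot tell `0` from `1` but the Markov approximation can, and a garbling never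
separates inputs that its source channel does not. -/
noncomputable def counterexampleJoint : Fin 3 × Fin 2 → ℝ :=
  fun q => if q.2 = (if q.1 = 2 then 1 else 0) then 1 / 3 else 0

def counterexampleCoarsening : Fin 3 → Fin 2 :=
  fun s => if s = 0 then 0 else 1

lemma counterexampleJoint_nonneg (q : Fin 3 × Fin 2) : 0 ≤ counterexampleJoint q := by
  unfold counterexampleJoint
  split_ifs <;> norm_num

lemma counterexampleJoint_sum : ∑ q, counterexampleJoint q = 1 := by
  simp [counterexampleJoint, Fintype.sum_prod_type, Fin.sum_univ_three]
  norm_num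

lemma margS2_counterexampleJoint (s : Fin 3) : margS2 counterexampleJoint s = 1 / 3 := by
  fin_cases s <;> simp [margS2, counterexampleJoint]

lemma chanDirect_counterexample_zero_eq_one (x : Fin 2) :
    chanDirect counterexampleJoint x 0 = chanDirect counterexampleJoint x 1 := by
  simp [chanDirect, margS2_counterexampleJoint, counterexampleJoint]

lemma chanMarkov_counterexample_zero_zero :
    chanMarkov counterexampleCoarsening counterexampleJoint 0 0 = 1 := by
  simp [chanMarkov, counterexampleCoarsening, counterexampleJoint, margS2, Finset.sum_filter]

lemma chanMarkov_counterexample_zero_one :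
    chanMarkov counterexampleCoarsening counterexampleJoint 0 1 = 1 / 2 := by
  simp [chanMarkov, counterexampleCoarsening, counterexampleJoint, margS2, Finset.sum_filter,
    Fin.sum_univ_three]
  norm_num

theorem prop2_markov_approx_not_garbling :
    ∃ (nS nS' nX : ℕ) (P : Fin nS × Fin nX → ℝ) (f : Fin nS → Fin nS'),
      (∀ q, 0 ≤ P q) ∧ (∑ q, P q = 1) ∧ (∀ s, 0 < margS2 P s) ∧
      ¬ IsGarbling (chanMarkov f P) (chanDirect P) := by
  refine ⟨3, 2, 2, counterexampleJoint, counterexampleCoarsening, counterexampleJoint_nonneg,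
    counterexampleJoint_sum, fun s => by norm_num [margS2_counterexampleJoint], fun h => ?_⟩
  have := h.column_eq chanDirect_counterexample_zero_eq_one 0
  rw [chanMarkov_counterexample_zero_zero, chanMarkov_counterexample_zero_one] at this
  norm_num at this
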